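/- arXiv:1801.04103 — 4 statements merged into one kernel-verified Lean document; each statement's English description precedes it below -/
import Mathlib

section
/- For odd n, the Majority function Maj(x)=sgn(Σ_{i=1}^n x_i) on {-1,1}^n is uniformly self-predicting: for all ρ∈[0,1] and all y∈{-1,1}^n, if T_ρ Maj(y)≠0 then sgn(T_ρ Maj(y))=Maj(y). -/
/-- Map a Boolean bit to ±1 ∈ ℝ (true ↦ 1, false ↦ -1). -/
def toR (b : Bool) : ℝ := if b then 1 else -1

/-- The character χ_S(x) = ∏_{i∈S} x_i. -/
def chi {n : ℕ} (S : Finset (Fin n)) (x : Fin n → Bool) : ℝ := ∏ i ∈ S, toR (x i)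

/-- Noise operator: T_ρ f (y) = E[f(X) | Y = y], where each coordinate of X
independently equals y_i with probability (1+ρ)/2 and its flip with probability (1-ρ)/2. -/
noncomputable def Tcond {n : ℕ} (ρ : ℝ) (f : (Fin n → Bool) → ℝ) (y : Fin n → Bool) : ℝ :=
  ∑ x : Fin n → Bool, (∏ i, if x i = y i then (1 + ρ) / 2 else (1 - ρ) / 2) * f x

/-- Majority function Maj(x) = sgn(Σ_i x_i) on {-1,1}^n. -/
noncomputable def maj {n : ℕ} (x : Fin n → Bool) : ℝ := Real.sign (∑ i, toR (x i))

/-!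
`T_ρ Maj` is odd, invariant under permutations of the coordinates, and monotone: for `ρ ≥ 0`,
`T_ρ` preserves monotonicity, by induction on the number of coordinates, since raising one bit
of `y` moves mass `ρ` from the lower to the higher value of `f` in that coordinate.
If `y` has at least as many ones as `yᶜ`, some permutation `π` gives `yᶜ ≤ y ∘ π`, hence
`-T_ρ Maj y = T_ρ Maj yᶜ ≤ T_ρ Maj (y ∘ π) = T_ρ Maj y`, i.e. `T_ρ Maj y ≥ 0`.
For odd `n` the counts of ones in `y` and `yᶜ` differ, so `Maj y = ±1`, and the case `Maj y = -1`
follows by passing to `yᶜ`.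
-/

open Finset

theorem Real.sign_monotone : Monotone Real.sign := by
  intro x y h
  unfold Real.sign
  split_ifs <;> linarith

theorem Equiv.Perm.exists_mapsTo_of_card_le {α : Type*} [Fintype α] [DecidableEq α]
    {s t : Finset α} (h : #s ≤ #t) : ∃ π : Equiv.Perm α, ∀ i ∈ s, π i ∈ t := by
  obtain ⟨f⟩ : Nonempty (s ↪ t) := Function.Embedding.nonempty_of_card_le (by simpa)
  obtain ⟨π, hπ⟩ := Equiv.Perm.exists_extending_pair ((↑) : s → α) (fun i => (f i : α))
    Subtype.val_injective (Subtype.val_injective.comp f.injective)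
  exact ⟨π, fun i hi => hπ ⟨i, hi⟩ ▸ (f ⟨i, hi⟩).2⟩

theorem toR_monotone : Monotone (toR : Bool → ℝ) := by
  intro a b h
  cases a <;> cases b <;> first | exact absurd h (by decide) | norm_num [toR]

theorem toR_not (b : Bool) : toR (!b) = -toR b := by
  cases b <;> norm_num [toR]

section NoiseOperator

variable {ρ : ℝ}

theorem tcond_mono {n : ℕ} (hρ : |ρ| ≤ 1) {f g : (Fin n → Bool) → ℝ} (hfg : f ≤ g)
    (y : Fin n → Bool) : Tcond ρ f y ≤ Tcond ρ g y :=
  sum_le_sum fun x _ => mul_le_mul_of_nonneg_left (hfg x)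
    (prod_nonneg fun i _ => by split_ifs <;> linarith [abs_le.1 hρ])

theorem tcond_cons {n : ℕ} (f : (Fin (n + 1) → Bool) → ℝ) (c : Bool) (y : Fin n → Bool) :
    Tcond ρ f (Fin.cons c y) = ∑ b, (if b = c then (1 + ρ) / 2 else (1 - ρ) / 2) *
      Tcond ρ (fun x => f (Fin.cons b x)) y := by
  simp only [Tcond, ← (Fin.consEquiv fun _ => Bool).sum_comp, Fintype.sum_prod_type,
    mul_sum, Fin.prod_univ_succ]
  simp [Fin.consEquiv, mul_assoc]

theorem monotone_tcond (hρ0 : 0 ≤ ρ) (hρ1 : ρ ≤ 1) :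
    ∀ {n : ℕ} {f : (Fin n → Bool) → ℝ}, Monotone f → Monotone (Tcond ρ f)
  | 0, _, _, y, y', _ => (congrArg _ (Subsingleton.elim y y')).le
  | n + 1, f, hf, y, y', hyy' => by
    have hρ : |ρ| ≤ 1 := abs_le.2 ⟨by linarith, hρ1⟩
    rw [← Fin.cons_self_tail y, ← Fin.cons_self_tail y'] at hyy' ⊢
    obtain ⟨hc, hy⟩ := Fin.cons_le_cons.1 hyy'
    set g : Bool → ℝ := fun b => Tcond ρ (fun x => f (Fin.cons b x)) (Fin.tail y')
    have hg : g false ≤ g true :=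
      tcond_mono hρ (fun x => hf (Fin.cons_le_cons.2 ⟨Bool.false_le _, le_rfl⟩)) _
    calc Tcond ρ f (Fin.cons (y 0) (Fin.tail y))
        ≤ ∑ b, (if b = y 0 then (1 + ρ) / 2 else (1 - ρ) / 2) * g b := by
          rw [tcond_cons]
          gcongr with b
          exact monotone_tcond hρ0 hρ1 (fun x x' h => hf (Fin.cons_le_cons.2 ⟨le_rfl, h⟩)) hy
      _ ≤ Tcond ρ f (Fin.cons (y' 0) (Fin.tail y')) := by
          rw [tcond_cons]
          revert hc
          cases y 0 <;> cases y' 0 <;> simp [g]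
          -- raising the first bit from `false` to `true` adds `ρ * (g true - g false) ≥ 0`
          nlinarith [mul_nonneg hρ0 (sub_nonneg.2 hg)]

theorem tcond_comp_perm {n : ℕ} {f : (Fin n → Bool) → ℝ} (π : Equiv.Perm (Fin n))
    (hf : ∀ x, f (x ∘ π) = f x) (y : Fin n → Bool) : Tcond ρ f (y ∘ π) = Tcond ρ f y := by
  refine Fintype.sum_equiv (π.arrowCongr (Equiv.refl Bool)) _ _ fun x => ?_
  congr 1
  · exact Fintype.prod_equiv π _ _ fun i => by simp
  · simpa [Function.comp_def] using hf (π.arrowCongr (Equiv.refl Bool) x)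

theorem tcond_compl {n : ℕ} {f : (Fin n → Bool) → ℝ} (hf : ∀ x, f xᶜ = -f x)
    (y : Fin n → Bool) : Tcond ρ f yᶜ = -Tcond ρ f y := by
  rw [Tcond, Tcond, ← sum_neg_distrib]
  refine Fintype.sum_equiv (compl_involutive.toPerm _) _ _ fun x => ?_
  simp [hf, Bool.compl_eq_bnot]

end NoiseOperator

theorem sum_toR_compl {n : ℕ} (x : Fin n → Bool) : ∑ i, toR (xᶜ i) = -∑ i, toR (x i) := by
  simp [← sum_neg_distrib, Bool.compl_eq_bnot, toR_not]

theorem sum_toR_eq_card_sub_card {n : ℕ} (x : Fin n → Bool) :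
    ∑ i, toR (x i) = (#{i | x i} : ℝ) - #{i | xᶜ i} := by
  rw [Finset.natCast_card_filter, Finset.natCast_card_filter, ← sum_sub_distrib]
  refine sum_congr rfl fun i _ => ?_
  cases h : x i <;> simp [h, toR, Bool.compl_eq_bnot]

theorem sum_toR_ne_zero {n : ℕ} (hn : Odd n) (x : Fin n → Bool) : ∑ i, toR (x i) ≠ 0 := by
  have hcard : #{i | x i} + #{i | xᶜ i} = n := by
    simpa [Bool.compl_eq_bnot] using card_filter_add_card_filter_not (s := univ) (x · = true)
  rw [sum_toR_eq_card_sub_card, sub_ne_zero, Ne, Nat.cast_inj]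
  intro h
  rw [h] at hcard
  exact Nat.not_even_iff_odd.2 hn ⟨_, hcard.symm⟩

theorem maj_monotone {n : ℕ} : Monotone (maj (n := n)) :=
  fun _ _ h => Real.sign_monotone (sum_le_sum fun i _ => toR_monotone (h i))

theorem maj_comp_perm {n : ℕ} (π : Equiv.Perm (Fin n)) (x : Fin n → Bool) :
    maj (x ∘ π) = maj x :=
  congrArg Real.sign (Equiv.sum_comp π fun i => toR (x i))

theorem maj_compl {n : ℕ} (x : Fin n → Bool) : maj xᶜ = -maj x := by
  rw [maj, maj, sum_toR_compl, Real.sign_neg]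

theorem tcond_maj_nonneg {n : ℕ} {ρ : ℝ} (hρ0 : 0 ≤ ρ) (hρ1 : ρ ≤ 1) {y : Fin n → Bool}
    (hy : 0 ≤ ∑ i, toR (y i)) : 0 ≤ Tcond ρ maj y := by
  have hcard : #{i | yᶜ i} ≤ #{i | y i} := by
    rw [sum_toR_eq_card_sub_card] at hy
    exact_mod_cast sub_nonneg.1 hy
  obtain ⟨π, hπ⟩ := Equiv.Perm.exists_mapsTo_of_card_le hcard
  have hle : yᶜ ≤ y ∘ π := fun i =>
    Bool.le_iff_imp.2 fun hi => by simpa using hπ i (by simpa using hi)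
  have := monotone_tcond hρ0 hρ1 maj_monotone hle
  rw [tcond_compl maj_compl, tcond_comp_perm π (maj_comp_perm π)] at this
  linarith

/-- For odd n, Majority is uniformly self-predicting. -/
theorem majority_usp {n : ℕ} (hn : Odd n) (ρ : ℝ) (hρ0 : 0 ≤ ρ) (hρ1 : ρ ≤ 1)
    (y : Fin n → Bool) (hne : Tcond ρ (maj (n := n)) y ≠ 0) :
    Real.sign (Tcond ρ (maj (n := n)) y) = maj y := by
  rcases (sum_toR_ne_zero hn y).lt_or_gt with hneg | hpos
  · have hcompl := tcond_maj_nonneg hρ0 hρ1 (y := yᶜ) (by rw [sum_toR_compl]; linarith)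
    rw [tcond_compl maj_compl] at hcompl
    rw [Real.sign_of_neg (lt_of_le_of_ne (by linarith) hne), maj, Real.sign_of_neg hneg]
  · have hT := lt_of_le_of_ne (tcond_maj_nonneg hρ0 hρ1 hpos.le) hne.symm
    rw [Real.sign_of_pos hT, maj, Real.sign_of_pos hpos]
end

section
/- Any monotone, odd, symmetric Boolean function on {-1,1}^n with n odd that takes values in {-1,1} must equal the Majority function (May's theorem). -/
/-!
A symmetric function only sees the number of `true` coordinates, and a symmetric monotone one is
monotone in that number, since any point with fewer `true`s can be permuted below one with more.
Negating all coordinates sends `k` trues to `n - k`, and as `n` is odd exactly one of `k`, `n - k`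
exceeds `n / 2`. If `k > n / 2`, monotonicity and oddness give `-f x = f (!x) ≤ f x`, so `f x = 1`;
symmetrically `f x = -1` when `k < n / 2`. That is the sign of `∑ xᵢ = 2k - n`.
-/

open Finset

section TrueCount

variable {ι : Type*} [Fintype ι]

def trueCount (x : ι → Bool) : ℕ := #{i | x i}

lemma trueCount_eq_card_subtype (x : ι → Bool) : trueCount x = Fintype.card {i // x i} :=
  (Fintype.card_subtype _).symm

lemma trueCount_not (x : ι → Bool) :
    trueCount (fun i => !x i) = Fintype.card ι - trueCount x := by
  have h := card_filter_add_card_filter_not (s := univ) (fun i => x i = true)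
  simp only [Bool.not_eq_true, card_univ] at h
  simp only [trueCount, Bool.not_eq_true']
  omega

lemma sum_toR_eq (x : ι → Bool) :
    ∑ i, toR (x i) = 2 * (trueCount x : ℝ) - Fintype.card ι := by
  have h : ∀ i, toR (x i) = 2 * (if x i then (1 : ℝ) else 0) - 1 := fun i => by
    cases x i <;> norm_num [toR]
  simp only [h, sum_sub_distrib, ← mul_sum, sum_boole, trueCount, sum_const, card_univ]
  simp

lemma exists_perm_comp_eq_of_trueCount_eq {x y : ι → Bool} (h : trueCount x = trueCount y) :
    ∃ π : Equiv.Perm ι, x ∘ π = y := by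
  rw [trueCount_eq_card_subtype, trueCount_eq_card_subtype] at h
  let e : {i // y i} ≃ {i // x i} := Fintype.equivOfCardEq h.symm
  refine ⟨e.extendSubtype, funext fun i => ?_⟩
  by_cases hi : y i
  · simpa [hi] using e.extendSubtype_mem i hi
  · simpa [hi] using e.extendSubtype_not_mem i hi

lemma exists_le_trueCount_eq {x : ι → Bool} {k : ℕ} (hk : k ≤ trueCount x) :
    ∃ z ≤ x, trueCount z = k := by
  classical
  obtain ⟨s, hs, rfl⟩ := exists_subset_card_eq hk
  refine ⟨fun i => decide (i ∈ s), fun i => ?_, by simp [trueCount]⟩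
  by_cases hi : i ∈ s
  · simp [hi, (mem_filter.mp (hs hi)).2]
  · simp [hi]

lemma le_of_trueCount_le {β : Type*} [Preorder β] {f : (ι → Bool) → β} (hmono : Monotone f)
    (hsym : ∀ (π : Equiv.Perm ι) (x : ι → Bool), f (x ∘ π) = f x) {x y : ι → Bool}
    (h : trueCount y ≤ trueCount x) : f y ≤ f x := by
  obtain ⟨z, hzx, hz⟩ := exists_le_trueCount_eq h
  obtain ⟨π, rfl⟩ := exists_perm_comp_eq_of_trueCount_eq hz
  exact (hsym π z).trans_le (hmono hzx)

end TrueCount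

/-- May's theorem: a monotone, odd, symmetric Boolean function
on {-1,1}^n, n odd, with values in {-1,1}, equals Majority. -/
theorem mays_theorem {n : ℕ} (hn : Odd n)
    (f : (Fin n → Bool) → ℝ) (hf : ∀ x, f x = 1 ∨ f x = -1)
    (hmono : ∀ y z : Fin n → Bool, (∀ i, y i ≤ z i) → f y ≤ f z)
    (hodd : ∀ x : Fin n → Bool, f (fun i => !(x i)) = - f x)
    (hsym : ∀ (π : Equiv.Perm (Fin n)) (x : Fin n → Bool), f (x ∘ π) = f x) :
    ∀ x, f x = maj x := by
  intro x
  obtain ⟨m, rfl⟩ := hn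
  have hcount : trueCount (fun i => !x i) = 2 * m + 1 - trueCount x := by
    simpa using trueCount_not x
  have hmono' : Monotone f := fun y z => hmono y z
  rw [maj, sum_toR_eq, Fintype.card_fin]
  rcases le_or_gt (trueCount x) m with hk | hk
  · have hle : f x ≤ -f x := hodd x ▸ le_of_trueCount_le hmono' hsym (by omega)
    have hk' : (trueCount x : ℝ) ≤ m := by exact_mod_cast hk
    rw [Real.sign_of_neg (by push_cast; linarith)]
    rcases hf x with h | h <;> linarith
  · have hle : -f x ≤ f x := hodd x ▸ le_of_trueCount_le hmono' hsym (by omega)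
    have hk' : (m : ℝ) + 1 ≤ trueCount x := by exact_mod_cast hk
    rw [Real.sign_of_pos (by push_cast; linarith)]
    rcases hf x with h | h <;> linarith
end

section
/- Let f(x^n)=g(x_1,…,x_k)·h(x_{k+1},…,x_n) be a product of two Boolean functions on disjoint variable sets. Then f is ρ-SP (at every point) if and only if both g and h are ρ-SP. -/
/-- f is ρ-self-predicting: at every y with T_ρ f(y) ≠ 0, sgn T_ρ f(y) = f(y). -/
noncomputable def IsSP {n : ℕ} (ρ : ℝ) (f : (Fin n → Bool) → ℝ) : Prop :=
  ∀ y : Fin n → Bool, Tcond ρ f y ≠ 0 → Real.sign (Tcond ρ f y) = f y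

lemma toR_sq (b : Bool) : toR b * toR b = 1 := by cases b <;> simp [toR]

lemma orth {n : ℕ} (x y : Fin n → Bool) :
    ∑ S : Finset (Fin n), chi S x * chi S y = if x = y then (2:ℝ)^n else 0 := by
  have h1 : ∀ S : Finset (Fin n), chi S x * chi S y = ∏ i ∈ S, (toR (x i) * toR (y i)) := by
    intro S; simp [chi, Finset.prod_mul_distrib]
  calc ∑ S : Finset (Fin n), chi S x * chi S y
      = ∑ S ∈ (Finset.univ : Finset (Fin n)).powerset,
          (∏ i ∈ S, (toR (x i) * toR (y i))) * ∏ _i ∈ Finset.univ \ S, (1:ℝ) := by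
        rw [Finset.powerset_univ]
        refine Finset.sum_congr rfl fun S _ => ?_
        rw [h1]; simp
    _ = ∏ i : Fin n, (toR (x i) * toR (y i) + 1) := (Finset.prod_add _ _ _).symm
    _ = if x = y then (2:ℝ)^n else 0 := by
        by_cases hxy : x = y
        · subst hxy; simp [toR_sq]; norm_num
        · rw [if_neg hxy]
          obtain ⟨i, hi⟩ : ∃ i, x i ≠ y i := by
            by_contra hc; push_neg at hc; exact hxy (funext hc)
          refine Finset.prod_eq_zero (Finset.mem_univ i) ?_
          cases hxi : x i <;> cases hyi : y i <;> simp_all [toR]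

lemma weight_eq {n : ℕ} (ρ : ℝ) (x y : Fin n → Bool) :
    (∏ i, if x i = y i then (1 + ρ) / 2 else (1 - ρ) / 2)
      = ((2:ℝ)⁻¹)^n * ∑ S : Finset (Fin n), ρ^S.card * (chi S x * chi S y) := by
  have h1 : ∀ i : Fin n, (if x i = y i then (1 + ρ) / 2 else (1 - ρ) / 2)
      = (2:ℝ)⁻¹ * (ρ * (toR (x i) * toR (y i)) + 1) := by
    intro i
    cases hxi : x i <;> cases hyi : y i <;> simp [toR] <;> ring
  calc (∏ i, if x i = y i then (1 + ρ) / 2 else (1 - ρ) / 2)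
      = ∏ i : Fin n, ((2:ℝ)⁻¹ * (ρ * (toR (x i) * toR (y i)) + 1)) :=
        Finset.prod_congr rfl fun i _ => h1 i
    _ = ((2:ℝ)⁻¹)^n * ∏ i : Fin n, (ρ * (toR (x i) * toR (y i)) + 1) := by
        rw [Finset.prod_mul_distrib]; simp
    _ = ((2:ℝ)⁻¹)^n * ∑ S : Finset (Fin n), ρ^S.card * (chi S x * chi S y) := by
        congr 1
        rw [Finset.prod_add, ← Finset.powerset_univ]
        refine Finset.sum_congr rfl fun S _ => ?_
        rw [Finset.prod_const_one, mul_one, Finset.prod_mul_distrib,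
          Finset.prod_const, Finset.prod_mul_distrib]
        simp only [chi]
        try ring

lemma Tcond_eq {n : ℕ} (ρ : ℝ) (f : (Fin n → Bool) → ℝ) (y : Fin n → Bool) :
    Tcond ρ f y = ((2:ℝ)⁻¹)^n *
      ∑ S : Finset (Fin n), ρ^S.card * (∑ x, f x * chi S x) * chi S y := by
  calc Tcond ρ f y
      = ∑ x, (((2:ℝ)⁻¹)^n * ∑ S : Finset (Fin n), ρ^S.card * (chi S x * chi S y)) * f x := by
        unfold Tcond; exact Finset.sum_congr rfl fun x _ => by rw [weight_eq]
    _ = ∑ x, ∑ S : Finset (Fin n), ((2:ℝ)⁻¹)^n * (ρ^S.card * (chi S x * chi S y)) * f x := by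
        refine Finset.sum_congr rfl fun x _ => ?_
        rw [Finset.mul_sum, Finset.sum_mul]
    _ = ∑ S : Finset (Fin n), ∑ x, ((2:ℝ)⁻¹)^n * (ρ^S.card * (chi S x * chi S y)) * f x :=
        Finset.sum_comm
    _ = ((2:ℝ)⁻¹)^n * ∑ S : Finset (Fin n), ρ^S.card * (∑ x, f x * chi S x) * chi S y := by
        rw [Finset.mul_sum]
        refine Finset.sum_congr rfl fun S _ => ?_
        rw [Finset.mul_sum, Finset.sum_mul, Finset.mul_sum]
        exact Finset.sum_congr rfl fun x _ => by ring

lemma exists_coeff {n : ℕ} (f : (Fin n → Bool) → ℝ) (hf : ∀ x, f x = 1 ∨ f x = -1) :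
    ∃ S : Finset (Fin n), (∑ x, f x * chi S x) ≠ 0 := by
  by_contra hc
  push_neg at hc
  set y : Fin n → Bool := fun _ => true with hy
  have key : ∑ S : Finset (Fin n), (∑ x, f x * chi S x) * chi S y = (2:ℝ)^n * f y := by
    calc ∑ S : Finset (Fin n), (∑ x, f x * chi S x) * chi S y
        = ∑ S : Finset (Fin n), ∑ x, f x * (chi S x * chi S y) := by
          refine Finset.sum_congr rfl fun S _ => ?_
          rw [Finset.sum_mul]; exact Finset.sum_congr rfl fun x _ => by ring
      _ = ∑ x, ∑ S : Finset (Fin n), f x * (chi S x * chi S y) := Finset.sum_comm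
      _ = ∑ x, f x * ∑ S : Finset (Fin n), chi S x * chi S y := by
          refine Finset.sum_congr rfl fun x _ => (Finset.mul_sum _ _ _).symm
      _ = ∑ x, f x * (if x = y then (2:ℝ)^n else 0) := by
          refine Finset.sum_congr rfl fun x _ => by rw [orth]
      _ = (2:ℝ)^n * f y := by
          rw [Finset.sum_eq_single y]
          · simp [mul_comm]
          · intro x _ hxy; simp [hxy]
          · intro hy2; exact absurd (Finset.mem_univ y) hy2
  simp only [hc, zero_mul, Finset.sum_const_zero] at key
  have h1 : f y ≠ 0 := by rcases hf y with h1 | h1 <;> rw [h1] <;> norm_num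
  have h2 : (2:ℝ)^n ≠ 0 := by positivity
  exact h1 (by
    have := key.symm
    rcases mul_eq_zero.mp this with h3 | h3
    · exact absurd h3 h2
    · exact h3)

lemma stab_pos {n : ℕ} (ρ : ℝ) (hρ0 : 0 < ρ) (f : (Fin n → Bool) → ℝ)
    (hf : ∀ x, f x = 1 ∨ f x = -1) :
    0 < ∑ y, Tcond ρ f y * f y := by
  have key : ∑ y, Tcond ρ f y * f y
      = ((2:ℝ)⁻¹)^n * ∑ S : Finset (Fin n), ρ^S.card * (∑ x, f x * chi S x)^2 := by
    calc ∑ y, Tcond ρ f y * f y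
        = ∑ y, ∑ S : Finset (Fin n),
            ((2:ℝ)⁻¹)^n * (ρ^S.card * (∑ x, f x * chi S x)) * (chi S y * f y) := by
          refine Finset.sum_congr rfl fun y _ => ?_
          rw [Tcond_eq]
          rw [mul_assoc, Finset.sum_mul, Finset.mul_sum]
          exact Finset.sum_congr rfl fun S _ => by ring
      _ = ∑ S : Finset (Fin n), ∑ y,
            ((2:ℝ)⁻¹)^n * (ρ^S.card * (∑ x, f x * chi S x)) * (chi S y * f y) :=
          Finset.sum_comm
      _ = ((2:ℝ)⁻¹)^n * ∑ S : Finset (Fin n), ρ^S.card * (∑ x, f x * chi S x)^2 := by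
          rw [Finset.mul_sum]
          refine Finset.sum_congr rfl fun S _ => ?_
          rw [← Finset.mul_sum]
          have h2 : ∑ y, chi S y * f y = ∑ x, f x * chi S x :=
            Finset.sum_congr rfl fun y _ => mul_comm _ _
          rw [h2]; ring
  rw [key]
  obtain ⟨S₀, hS₀⟩ := exists_coeff f hf
  have hpos : 0 < ρ^S₀.card * (∑ x, f x * chi S₀ x)^2 := by positivity
  have hsum : 0 < ∑ S : Finset (Fin n), ρ^S.card * (∑ x, f x * chi S x)^2 :=
    Finset.sum_pos' (fun S _ => by positivity) ⟨S₀, Finset.mem_univ S₀, hpos⟩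
  exact mul_pos (by positivity) hsum

lemma Tcond_prod {k m : ℕ} (ρ : ℝ) (g : (Fin k → Bool) → ℝ) (h : (Fin m → Bool) → ℝ)
    (y : Fin (k + m) → Bool) :
    Tcond ρ (fun x : Fin (k + m) → Bool =>
        g (fun i => x (Fin.castAdd m i)) * h (fun j => x (Fin.natAdd k j))) y
      = Tcond ρ g (fun i => y (Fin.castAdd m i)) * Tcond ρ h (fun j => y (Fin.natAdd k j)) := by
  unfold Tcond
  rw [Finset.sum_mul_sum]
  have hb : Function.Bijective
      (fun p : (Fin k → Bool) × (Fin m → Bool) => Fin.append p.1 p.2) := by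
    constructor
    · rintro ⟨a, b⟩ ⟨a', b'⟩ hab
      have h1 : a = a' := funext fun i => by
        have := congrFun hab (Fin.castAdd m i); simpa using this
      have h2 : b = b' := funext fun j => by
        have := congrFun hab (Fin.natAdd k j); simpa using this
      simp [h1, h2]
    · intro x
      refine ⟨⟨fun i => x (Fin.castAdd m i), fun j => x (Fin.natAdd k j)⟩, ?_⟩
      funext i
      refine Fin.addCases (fun i => ?_) (fun j => ?_) i
      · simp
      · simp
  rw [← Fintype.sum_bijective _ hb _ _ (fun p => rfl)]
  rw [Fintype.sum_prod_type]
  refine Finset.sum_congr rfl fun a _ => ?_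
  refine Finset.sum_congr rfl fun b _ => ?_
  simp only [Fin.append_left, Fin.append_right]
  rw [Fin.prod_univ_add]
  simp only [Fin.append_left, Fin.append_right]
  ring

lemma sign_mul' (a b : ℝ) : Real.sign (a * b) = Real.sign a * Real.sign b := by
  rcases lt_trichotomy a 0 with ha | ha | ha
  · rcases lt_trichotomy b 0 with hb | hb | hb
    · rw [Real.sign_of_pos (mul_pos_of_neg_of_neg ha hb), Real.sign_of_neg ha,
        Real.sign_of_neg hb]; norm_num
    · rw [hb]; simp
    · rw [Real.sign_of_neg (mul_neg_of_neg_of_pos ha hb), Real.sign_of_neg ha,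
        Real.sign_of_pos hb]; norm_num
  · rw [ha]; simp
  · rcases lt_trichotomy b 0 with hb | hb | hb
    · rw [Real.sign_of_neg (mul_neg_of_pos_of_neg ha hb), Real.sign_of_pos ha,
        Real.sign_of_neg hb]; norm_num
    · rw [hb]; simp
    · rw [Real.sign_of_pos (mul_pos ha hb), Real.sign_of_pos ha, Real.sign_of_pos hb]; norm_num

lemma mul_sign_self (a : ℝ) : a * Real.sign a = |a| := by
  rcases lt_trichotomy a 0 with ha | ha | ha
  · rw [Real.sign_of_neg ha, abs_of_neg ha]; ring
  · simp [ha]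
  · rw [Real.sign_of_pos ha, abs_of_pos ha]; ring

/-- For f(x) = g(x_1..x_k)·h(x_{k+1}..x_n) a product of Boolean functions
on disjoint variable sets, f is ρ-SP iff both g and h are ρ-SP. -/
theorem product_sp_iff {k m : ℕ} (ρ : ℝ) (hρ0 : 0 < ρ) (hρ1 : ρ ≤ 1)
    (g : (Fin k → Bool) → ℝ) (hg : ∀ x, g x = 1 ∨ g x = -1)
    (h : (Fin m → Bool) → ℝ) (hh : ∀ x, h x = 1 ∨ h x = -1) :
    IsSP ρ (fun x : Fin (k + m) → Bool =>
        g (fun i => x (Fin.castAdd m i)) * h (fun j => x (Fin.natAdd k j)))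
      ↔ IsSP ρ g ∧ IsSP ρ h := by
  constructor
  · intro hf
    have key : ∀ (a : Fin k → Bool) (b : Fin m → Bool),
        Tcond ρ g a ≠ 0 → Tcond ρ h b ≠ 0 →
        Real.sign (Tcond ρ g a) * Real.sign (Tcond ρ h b) = g a * h b := by
      intro a b ha hb
      have := hf (Fin.append a b) (by
        rw [Tcond_prod]
        simp only [Fin.append_left, Fin.append_right]
        exact mul_ne_zero ha hb)
      rw [Tcond_prod] at this
      simp only [Fin.append_left, Fin.append_right] at this
      rw [sign_mul'] at this
      exact this
    constructor
    · intro a ha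
      by_contra hcon
      have hsg := Real.sign_apply_eq_of_ne_zero _ ha
      have hneg : ∀ b, Tcond ρ h b * h b ≤ 0 := by
        intro b
        by_cases hb : Tcond ρ h b = 0
        · simp [hb]
        · have hk2 := key a b ha hb
          have hsh : Real.sign (Tcond ρ h b) = - h b := by
            rcases hsg with hs | hs <;> rcases hg a with hga | hga <;>
              rw [hs, hga] at hk2 hcon <;>
              first
                | exact absurd rfl hcon
                | linarith [hk2]
          have heq : Tcond ρ h b * h b = - |Tcond ρ h b| := by
            rw [← mul_sign_self (Tcond ρ h b), hsh]; ring
          rw [heq, neg_nonpos]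
          exact abs_nonneg _
      have hp := stab_pos ρ hρ0 h hh
      have hle : ∑ b, Tcond ρ h b * h b ≤ 0 :=
        Finset.sum_nonpos fun b _ => hneg b
      linarith
    · intro b hb
      by_contra hcon
      have hsh := Real.sign_apply_eq_of_ne_zero _ hb
      have hneg : ∀ a, Tcond ρ g a * g a ≤ 0 := by
        intro a
        by_cases ha : Tcond ρ g a = 0
        · simp [ha]
        · have hk2 := key a b ha hb
          have hsga : Real.sign (Tcond ρ g a) = - g a := by
            rcases hsh with hs | hs <;> rcases hh b with hhb | hhb <;>
              rw [hs, hhb] at hk2 hcon <;>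
              first
                | exact absurd rfl hcon
                | (rcases hg a with hga | hga <;> rw [hga] at hk2 ⊢ <;> linarith [hk2])
          have heq : Tcond ρ g a * g a = - |Tcond ρ g a| := by
            rw [← mul_sign_self (Tcond ρ g a), hsga]; ring
          rw [heq, neg_nonpos]
          exact abs_nonneg _
      have hp := stab_pos ρ hρ0 g hg
      have hle : ∑ a, Tcond ρ g a * g a ≤ 0 :=
        Finset.sum_nonpos fun a _ => hneg a
      linarith
  · rintro ⟨hgsp, hhsp⟩ y hy
    rw [Tcond_prod] at hy ⊢
    have ha : Tcond ρ g (fun i => y (Fin.castAdd m i)) ≠ 0 := fun h0 => hy (by rw [h0]; ring)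
    have hb : Tcond ρ h (fun j => y (Fin.natAdd k j)) ≠ 0 := fun h0 => hy (by rw [h0]; ring)
    rw [sign_mul', hgsp _ ha, hhsp _ hb]
end

section
/- Let a_1,…,a_n be nonzero real numbers and b∈ℝ. If X_1,…,X_n are i.i.d. uniform on {-1,1}, then P(|Σ a_i X_i − b| < min_k |a_k|) ≤ 2^{-n}·C(n,⌊n/2⌋), where C(n,k) is the binomial coefficient. -/
open Finset

lemma sum_add_le_sum_of_subset {ι : Type*} [DecidableEq ι] {w : ι → ℝ} (hw : ∀ i, 0 ≤ w i)
    {S T : Finset ι} {i : ι} (hS : S ⊆ T) (hiT : i ∈ T) (hiS : i ∉ S) :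
    ∑ j ∈ S, w j + w i ≤ ∑ j ∈ T, w j := by
  rw [← sum_erase_add T w hiT]
  gcongr ?_ + _
  exact sum_le_sum_of_subset_of_nonneg (subset_erase.mpr ⟨hS, hiS⟩) fun j _ _ => hw j

section LittlewoodOfford

variable {ι : Type*} [Fintype ι]

noncomputable def alignedSet (a : ι → ℝ) (x : ι → Bool) : Finset ι :=
  {i | x i = decide (0 < a i)}

lemma mul_toR_eq_ite {a : ℝ} (ha : a ≠ 0) (u : Bool) :
    a * toR u = if u = decide (0 < a) then |a| else -|a| := by
  rcases ha.lt_or_gt with h | h <;> cases u <;>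
    simp [toR, h, h.not_gt, abs_of_pos, abs_of_neg]

lemma sum_mul_toR_eq {a : ι → ℝ} (ha : ∀ i, a i ≠ 0) (x : ι → Bool) :
    ∑ i, a i * toR (x i) = 2 * ∑ i ∈ alignedSet a x, |a i| - ∑ i, |a i| := by
  rw [← sum_filter_add_sum_filter_not univ (fun i => x i = decide (0 < a i)) fun i => |a i|]
  simp only [mul_toR_eq_ite (ha _), sum_ite, sum_neg_distrib, alignedSet]
  ring

lemma alignedSet_injective (a : ι → ℝ) : Function.Injective (alignedSet a) := by
  intro x y hxy
  funext i
  have hi : i ∈ alignedSet a x ↔ i ∈ alignedSet a y := by rw [hxy]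
  simp only [alignedSet, mem_filter, mem_univ, true_and] at hi
  revert hi
  generalize decide (0 < a i) = d
  cases d <;> cases x i <;> cases y i <;> decide

lemma isAntichain_image_alignedSet [DecidableEq ι] {a : ι → ℝ} (ha : ∀ i, a i ≠ 0) {m : ℝ}
    (hm : ∀ i, m ≤ |a i|) (b : ℝ) :
    IsAntichain (· ⊆ ·) (((univ.filter fun x : ι → Bool =>
      |∑ i, a i * toR (x i) - b| < m).image (alignedSet a) : Finset (Finset ι)) :
        Set (Finset ι)) := by
  simp only [coe_image, coe_filter, mem_univ, true_and]
  rintro _ ⟨x, hx, rfl⟩ _ ⟨y, hy, rfl⟩ hne hsub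
  obtain ⟨i, hiy, hix⟩ := exists_of_ssubset (lt_of_le_of_ne hsub hne)
  have hgap := sum_add_le_sum_of_subset (fun j => abs_nonneg (a j)) hsub hiy hix
  rw [Set.mem_ofPred_eq, sum_mul_toR_eq ha, abs_lt] at hx hy
  linarith [hm i]

theorem card_filter_abs_sum_mul_toR_sub_lt_le_choose [DecidableEq ι] {a : ι → ℝ}
    (ha : ∀ i, a i ≠ 0) {m : ℝ} (hm : ∀ i, m ≤ |a i|) (b : ℝ) :
    #{x : ι → Bool | |∑ i, a i * toR (x i) - b| < m} ≤
      (Fintype.card ι).choose (Fintype.card ι / 2) := by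
  rw [← card_image_of_injective _ (alignedSet_injective a)]
  exact (isAntichain_image_alignedSet ha hm b).sperner

end LittlewoodOfford

/-- Sperner/Littlewood–Offord bound: for nonzero reals a_1,…,a_n and b ∈ ℝ,
with X_1,…,X_n i.i.d. uniform on {-1,1},
P(|Σ a_i X_i − b| < min_k |a_k|) ≤ 2^{-n}·C(n,⌊n/2⌋). -/
theorem littlewood_offord_sperner {n : ℕ} (hn : 0 < n)
    (a : Fin n → ℝ) (ha : ∀ i, a i ≠ 0) (b : ℝ) :
    ((Finset.univ.filter fun x : Fin n → Bool =>
        |(∑ i, a i * toR (x i)) - b| <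
          Finset.univ.inf' (Finset.univ_nonempty_iff.mpr ⟨⟨0, hn⟩⟩) (fun i => |a i|)).card : ℝ)
        / 2 ^ n
      ≤ (n.choose (n / 2) : ℝ) / 2 ^ n := by
  have hcard := card_filter_abs_sum_mul_toR_sub_lt_le_choose ha
    (fun i => Finset.inf'_le (fun i => |a i|) (Finset.mem_univ i)) b
    (m := Finset.univ.inf' (Finset.univ_nonempty_iff.mpr ⟨⟨0, hn⟩⟩) (fun i => |a i|))
  rw [Fintype.card_fin] at hcard
  gcongr
end
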